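/- arXiv:0801.2548 — 6 statements merged into one kernel-verified Lean document; each statement's English description precedes it below -/
import Mathlib

section
/- For all real θ, θ', the 4×4 matrix R̂(θ) with rows (a₊,0,0,a₋), (0,a₊,a₋,0), (0,a₋,a₊,0), (a₋,0,0,a₊), where a± = (1/2)(e^{m₊θ} ± e^{m₋θ}), satisfies the braid equation R̂₁₂(θ) R̂₂₃(θ+θ') R̂₁₂(θ') = R̂₂₃(θ') R̂₁₂(θ+θ') R̂₂₃(θ), where R̂₁₂ = R̂ ⊗ I₂ and R̂₂₃ = I₂ ⊗ R̂ as 8×8 matrices. -/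
open Matrix Kronecker

noncomputable def aPlus (mp mm θ : ℝ) : ℝ := (Real.exp (mp * θ) + Real.exp (mm * θ)) / 2
noncomputable def aMinus (mp mm θ : ℝ) : ℝ := (Real.exp (mp * θ) - Real.exp (mm * θ)) / 2

def Kmat : Matrix (Fin 2) (Fin 2) ℝ := !![0, 1; 1, 0]

/-- `R̂(θ) = a₊ I₄ + a₋ (K ⊗ K)`, i.e. rows `(a₊,0,0,a₋), (0,a₊,a₋,0), (0,a₋,a₊,0), (a₋,0,0,a₊)`. -/
noncomputable def Rhat (mp mm θ : ℝ) : Matrix (Fin 2 × Fin 2) (Fin 2 × Fin 2) ℝ :=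
  aPlus mp mm θ • (1 : Matrix (Fin 2 × Fin 2) (Fin 2 × Fin 2) ℝ) + aMinus mp mm θ • (Kmat ⊗ₖ Kmat)

/-- `R̂₁₂ = R̂ ⊗ I₂` acting on the first two factors of `(ℝ²)^{⊗3}`. -/
noncomputable def R12 (mp mm θ : ℝ) :
    Matrix (Fin 2 × Fin 2 × Fin 2) (Fin 2 × Fin 2 × Fin 2) ℝ :=
  Matrix.of fun p q =>
    Rhat mp mm θ (p.1, p.2.1) (q.1, q.2.1) * (if p.2.2 = q.2.2 then 1 else 0)

/-- `R̂₂₃ = I₂ ⊗ R̂` acting on the last two factors of `(ℝ²)^{⊗3}`. -/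
noncomputable def R23 (mp mm θ : ℝ) :
    Matrix (Fin 2 × Fin 2 × Fin 2) (Fin 2 × Fin 2 × Fin 2) ℝ :=
  Matrix.of fun p q =>
    (if p.1 = q.1 then 1 else 0) * Rhat mp mm θ p.2 q.2


/- auxiliary machinery -/

noncomputable def Lemb (A : Matrix (Fin 2 × Fin 2) (Fin 2 × Fin 2) ℝ) :
    Matrix (Fin 2 × Fin 2 × Fin 2) (Fin 2 × Fin 2 × Fin 2) ℝ :=
  Matrix.of fun p q => A (p.1, p.2.1) (q.1, q.2.1) * (if p.2.2 = q.2.2 then 1 else 0)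

noncomputable def Remb (A : Matrix (Fin 2 × Fin 2) (Fin 2 × Fin 2) ℝ) :
    Matrix (Fin 2 × Fin 2 × Fin 2) (Fin 2 × Fin 2 × Fin 2) ℝ :=
  Matrix.of fun p q => (if p.1 = q.1 then 1 else 0) * A p.2 q.2

lemma Lemb_mul (A B : Matrix (Fin 2 × Fin 2) (Fin 2 × Fin 2) ℝ) :
    Lemb A * Lemb B = Lemb (A * B) := by
  ext ⟨a, b, c⟩ ⟨d, e, f⟩
  simp only [Lemb, Matrix.mul_apply, Matrix.of_apply, Fintype.sum_prod_type, Fin.sum_univ_two]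
  fin_cases c <;> fin_cases f <;> simp

lemma Remb_mul (A B : Matrix (Fin 2 × Fin 2) (Fin 2 × Fin 2) ℝ) :
    Remb A * Remb B = Remb (A * B) := by
  ext ⟨a, b, c⟩ ⟨d, e, f⟩
  simp only [Remb, Matrix.mul_apply, Matrix.of_apply, Fintype.sum_prod_type, Fin.sum_univ_two]
  fin_cases a <;> fin_cases d <;>
    simp [Matrix.mul_apply, Fintype.sum_prod_type, Fin.sum_univ_two]

lemma Lemb_add (A B : Matrix (Fin 2 × Fin 2) (Fin 2 × Fin 2) ℝ) :
    Lemb (A + B) = Lemb A + Lemb B := by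
  ext p q; simp only [Lemb, Matrix.add_apply, Matrix.of_apply]; ring

lemma Remb_add (A B : Matrix (Fin 2 × Fin 2) (Fin 2 × Fin 2) ℝ) :
    Remb (A + B) = Remb A + Remb B := by
  ext p q; simp only [Remb, Matrix.add_apply, Matrix.of_apply]; ring

lemma Lemb_smul (x : ℝ) (A : Matrix (Fin 2 × Fin 2) (Fin 2 × Fin 2) ℝ) :
    Lemb (x • A) = x • Lemb A := by
  ext p q
  simp only [Lemb, Matrix.smul_apply, Matrix.of_apply, smul_eq_mul]
  ring

lemma Remb_smul (x : ℝ) (A : Matrix (Fin 2 × Fin 2) (Fin 2 × Fin 2) ℝ) :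
    Remb (x • A) = x • Remb A := by
  ext p q
  simp only [Remb, Matrix.smul_apply, Matrix.of_apply, smul_eq_mul]
  ring

lemma Lemb_one : Lemb (1 : Matrix (Fin 2 × Fin 2) (Fin 2 × Fin 2) ℝ) = 1 := by
  ext ⟨a, b, c⟩ ⟨d, e, f⟩
  by_cases h1 : a = d <;> by_cases h2 : b = e <;> by_cases h3 : c = f <;>
    simp [Lemb, Matrix.one_apply, Prod.ext_iff, h1, h2, h3]

lemma Remb_one : Remb (1 : Matrix (Fin 2 × Fin 2) (Fin 2 × Fin 2) ℝ) = 1 := by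
  ext ⟨a, b, c⟩ ⟨d, e, f⟩
  by_cases h1 : a = d <;> by_cases h2 : b = e <;> by_cases h3 : c = f <;>
    simp [Remb, Matrix.one_apply, Prod.ext_iff, h1, h2, h3]

set_option maxHeartbeats 2000000 in
lemma ST_comm :
    Lemb (Kmat ⊗ₖ Kmat) * Remb (Kmat ⊗ₖ Kmat)
      = Remb (Kmat ⊗ₖ Kmat) * Lemb (Kmat ⊗ₖ Kmat) := by
  ext ⟨a, b, c⟩ ⟨d, e, f⟩
  simp only [Lemb, Remb, Matrix.mul_apply, Matrix.of_apply, Matrix.kroneckerMap_apply,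
    Fintype.sum_prod_type, Fin.sum_univ_two, smul_eq_mul]
  fin_cases a <;> fin_cases b <;> fin_cases c <;> fin_cases d <;> fin_cases e <;> fin_cases f <;>
    norm_num [Kmat]

lemma Kmat_mul_Kmat : Kmat * Kmat = 1 := by
  ext i j
  fin_cases i <;> fin_cases j <;>
    simp [Kmat, Matrix.mul_apply, Fin.sum_univ_two, Matrix.one_apply]

lemma M_sq : (Kmat ⊗ₖ Kmat) * (Kmat ⊗ₖ Kmat) = (1 : Matrix (Fin 2 × Fin 2) (Fin 2 × Fin 2) ℝ) := by
  rw [← Matrix.mul_kronecker_mul, Kmat_mul_Kmat, Matrix.one_kronecker_one]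

lemma aPlus_add' (mp mm θ θ' : ℝ) :
    aPlus mp mm (θ + θ') = aPlus mp mm θ * aPlus mp mm θ' + aMinus mp mm θ * aMinus mp mm θ' := by
  simp only [aPlus, aMinus, mul_add, Real.exp_add]; ring

lemma aMinus_add' (mp mm θ θ' : ℝ) :
    aMinus mp mm (θ + θ') = aPlus mp mm θ * aMinus mp mm θ' + aMinus mp mm θ * aPlus mp mm θ' := by
  simp only [aPlus, aMinus, mul_add, Real.exp_add]; ring

lemma Rhat_add (mp mm θ θ' : ℝ) :
    Rhat mp mm (θ + θ') = Rhat mp mm θ * Rhat mp mm θ' := by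
  unfold Rhat
  simp only [add_mul, mul_add, smul_mul_assoc, mul_smul_comm, one_mul, mul_one, M_sq,
    aPlus_add', aMinus_add', smul_smul]
  module

lemma LR_comm (mp mm α β : ℝ) :
    Lemb (Rhat mp mm α) * Remb (Rhat mp mm β) = Remb (Rhat mp mm β) * Lemb (Rhat mp mm α) := by
  unfold Rhat
  simp only [Lemb_add, Remb_add, Lemb_smul, Remb_smul, Lemb_one, Remb_one]
  simp only [add_mul, mul_add, smul_mul_assoc, mul_smul_comm, one_mul, mul_one, ST_comm]
  module

lemma braid_aux {α : Type*} [Monoid α] (L L' S S' : α) (hSS : S * S' = S' * S)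
    (h1 : S' * L = L * S') (h2 : L' * S = S * L') :
    S' * (L * L') * S = L * (S * S') * L' := by
  calc S' * (L * L') * S = (S' * L) * (L' * S) := by simp only [mul_assoc]
    _ = (L * S') * (S * L') := by rw [h1, h2]
    _ = L * (S' * S) * L' := by simp only [mul_assoc]
    _ = L * (S * S') * L' := by rw [hSS]

theorem braid_equation_4x4 (mp mm : ℝ) (θ θ' : ℝ) :
    R12 mp mm θ * R23 mp mm (θ + θ') * R12 mp mm θ'
      = R23 mp mm θ' * R12 mp mm (θ + θ') * R23 mp mm θ := by
  have h23' : R23 mp mm (θ + θ') = R23 mp mm θ * R23 mp mm θ' := by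
    show Remb _ = _
    rw [Rhat_add, ← Remb_mul]; rfl
  have h12' : R12 mp mm (θ + θ') = R12 mp mm θ * R12 mp mm θ' := by
    show Lemb _ = _
    rw [Rhat_add, ← Lemb_mul]; rfl
  have hc : ∀ a b : ℝ, R12 mp mm a * R23 mp mm b = R23 mp mm b * R12 mp mm a := by
    intro a b; exact LR_comm mp mm a b
  have h23c : R23 mp mm θ * R23 mp mm θ' = R23 mp mm θ' * R23 mp mm θ := by
    rw [← h23']
    have : R23 mp mm (θ' + θ) = R23 mp mm θ' * R23 mp mm θ := by
      show Remb _ = _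
      rw [Rhat_add, ← Remb_mul]; rfl
    rw [← this, add_comm]
  rw [h12', h23']
  exact (braid_aux (R12 mp mm θ) (R12 mp mm θ') (R23 mp mm θ) (R23 mp mm θ')
    h23c (hc θ θ').symm (hc θ' θ)).symm
end

section
/- Let A₁ = diag(1,x), D₁ = diag(x,1), B₁ = [[0,x],[1,0]], C₁ = [[0,1],[x,0]], and define recursively A_{r+1} = A₁⊗A_r + B₁⊗C_r, B_{r+1} = A₁⊗B_r + B₁⊗D_r, C_{r+1} = C₁⊗A_r + D₁⊗C_r, D_{r+1} = D₁⊗D_r + C₁⊗B_r. Then for all r ≥ 1: B_r = (I_{2^{r-1}} ⊗ K) A_r and C_r = (I_{2^{r-1}} ⊗ K) D_r, where K = [[0,1],[1,0]]. -/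
open Matrix Kronecker

/-- Index type for `2^(n+1) × 2^(n+1)` matrices (level `r = n+1`). -/
def Idx : ℕ → Type
  | 0 => Fin 2
  | n + 1 => Fin 2 × Idx n

instance Idx.fintype : (n : ℕ) → Fintype (Idx n)
  | 0 => inferInstanceAs (Fintype (Fin 2))
  | n + 1 => letI := Idx.fintype n; inferInstanceAs (Fintype (Fin 2 × Idx n))

instance Idx.decEq : (n : ℕ) → DecidableEq (Idx n)
  | 0 => inferInstanceAs (DecidableEq (Fin 2))
  | n + 1 => letI := Idx.decEq n; inferInstanceAs (DecidableEq (Fin 2 × Idx n))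

def A1 (x : ℝ) : Matrix (Fin 2) (Fin 2) ℝ := !![1, 0; 0, x]
def B1 (x : ℝ) : Matrix (Fin 2) (Fin 2) ℝ := !![0, x; 1, 0]
def C1 (x : ℝ) : Matrix (Fin 2) (Fin 2) ℝ := !![0, 1; x, 0]
def D1 (x : ℝ) : Matrix (Fin 2) (Fin 2) ℝ := !![x, 0; 0, 1]

/-- The quadruple `(A_r, B_r, C_r, D_r)` at level `r = n+1`, via the coproduct recursion. -/
def ABCD (x : ℝ) : (n : ℕ) →
    (Matrix (Idx n) (Idx n) ℝ × Matrix (Idx n) (Idx n) ℝ ×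
      Matrix (Idx n) (Idx n) ℝ × Matrix (Idx n) (Idx n) ℝ)
  | 0 => (A1 x, B1 x, C1 x, D1 x)
  | n + 1 =>
    let p := ABCD x n
    (A1 x ⊗ₖ p.1 + B1 x ⊗ₖ p.2.2.1,
     A1 x ⊗ₖ p.2.1 + B1 x ⊗ₖ p.2.2.2,
     C1 x ⊗ₖ p.1 + D1 x ⊗ₖ p.2.2.1,
     D1 x ⊗ₖ p.2.2.2 + C1 x ⊗ₖ p.2.1)

def Amat (x : ℝ) (n : ℕ) : Matrix (Idx n) (Idx n) ℝ := (ABCD x n).1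
def Bmat (x : ℝ) (n : ℕ) : Matrix (Idx n) (Idx n) ℝ := (ABCD x n).2.1
def Cmat (x : ℝ) (n : ℕ) : Matrix (Idx n) (Idx n) ℝ := (ABCD x n).2.2.1
def Dmat (x : ℝ) (n : ℕ) : Matrix (Idx n) (Idx n) ℝ := (ABCD x n).2.2.2

/-- `K_{(r)} = I_{2^{r-1}} ⊗ K` at level `r = n+1`. -/
def Kr : (n : ℕ) → Matrix (Idx n) (Idx n) ℝ
  | 0 => Kmat
  | n + 1 => (1 : Matrix (Fin 2) (Fin 2) ℝ) ⊗ₖ Kr n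

/-- `K^{⊗r}` at level `r = n+1`. -/
def Kpow : (n : ℕ) → Matrix (Idx n) (Idx n) ℝ
  | 0 => Kmat
  | n + 1 => Kmat ⊗ₖ Kpow n

theorem Kr_mul_Kr : ∀ n, Kr n * Kr n = 1
  | 0 => by
    show Kmat * Kmat = 1
    simp [Kmat, Matrix.mul_fin_two, Matrix.one_fin_two]
  | n + 1 => by
    show (1 : Matrix (Fin 2) (Fin 2) ℝ) ⊗ₖ Kr n * (1 : Matrix (Fin 2) (Fin 2) ℝ) ⊗ₖ Kr n = 1
    rw [← Matrix.mul_kronecker_mul, Matrix.one_mul, Kr_mul_Kr, Matrix.one_kronecker_one]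

theorem B_eq_IK_A_and_C_eq_IK_D (x : ℝ) (n : ℕ) :
    Bmat x n = Kr n * Amat x n ∧ Cmat x n = Kr n * Dmat x n := by
  induction n with
  | zero =>
    constructor
    · show B1 x = Kmat * A1 x
      simp [B1, A1, Kmat, Matrix.mul_fin_two]
    · show C1 x = Kmat * D1 x
      simp [C1, D1, Kmat, Matrix.mul_fin_two]
  | succ n ih =>
    obtain ⟨hB, hC⟩ := ih
    have hA : Kr n * Cmat x n = Dmat x n := by
      rw [hC, ← Matrix.mul_assoc, Kr_mul_Kr, Matrix.one_mul]
    have hD : Kr n * Bmat x n = Amat x n := by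
      rw [hB, ← Matrix.mul_assoc, Kr_mul_Kr, Matrix.one_mul]
    constructor
    · show A1 x ⊗ₖ Bmat x n + B1 x ⊗ₖ Dmat x n
        = (1 : Matrix (Fin 2) (Fin 2) ℝ) ⊗ₖ Kr n * (A1 x ⊗ₖ Amat x n + B1 x ⊗ₖ Cmat x n)
      rw [Matrix.mul_add, ← Matrix.mul_kronecker_mul, ← Matrix.mul_kronecker_mul,
        Matrix.one_mul, Matrix.one_mul, hB, hA]
    · show C1 x ⊗ₖ Amat x n + D1 x ⊗ₖ Cmat x n
        = (1 : Matrix (Fin 2) (Fin 2) ℝ) ⊗ₖ Kr n * (D1 x ⊗ₖ Dmat x n + C1 x ⊗ₖ Bmat x n)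
      rw [Matrix.mul_add, ← Matrix.mul_kronecker_mul, ← Matrix.mul_kronecker_mul,
        Matrix.one_mul, Matrix.one_mul, hC, hD, add_comm]
end

section
/- Let T_r(x) = A_r(x) + D_r(x) be the transfer matrix built from the coproduct recursion with fundamental blocks A₁ = diag(1,x), B₁ = [[0,x],[1,0]], C₁ = [[0,1],[x,0]], D₁ = diag(x,1). Then trace(T_r(x)) = 2(1+x)^r for all r ≥ 1. -/
open Matrix Kronecker

lemma trK {n : ℕ} (M : Matrix (Fin 2) (Fin 2) ℝ) (N : Matrix (Idx n) (Idx n) ℝ) :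
    Matrix.trace (show Matrix (Idx (n+1)) (Idx (n+1)) ℝ from M ⊗ₖ N) =
      Matrix.trace M * Matrix.trace N :=
  Matrix.trace_kronecker M N

theorem transfer_matrix_trace (x : ℝ) (n : ℕ) :
    Matrix.trace (Amat x n + Dmat x n) = 2 * (1 + x) ^ (n + 1) := by
  have hA1 : Matrix.trace (A1 x) = 1 + x := by
    simp [A1, Matrix.trace, Matrix.diag, Fin.sum_univ_two]
  have hD1 : Matrix.trace (D1 x) = 1 + x := by
    simp [D1, Matrix.trace, Matrix.diag, Fin.sum_univ_two]; ring
  have hB1 : Matrix.trace (B1 x) = 0 := by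
    simp [B1, Matrix.trace, Matrix.diag, Fin.sum_univ_two]
  have hC1 : Matrix.trace (C1 x) = 0 := by
    simp [C1, Matrix.trace, Matrix.diag, Fin.sum_univ_two]
  induction n with
  | zero =>
    have h : Matrix.trace (Amat x 0 + Dmat x 0) = Matrix.trace (A1 x) + Matrix.trace (D1 x) :=
      Matrix.trace_add (A1 x) (D1 x)
    rw [h, hA1, hD1]; ring
  | succ n ih =>
    have hA : Matrix.trace (Amat x (n+1)) = (1 + x) * Matrix.trace (Amat x n) := by
      have h : Amat x (n+1) =
          (show Matrix (Idx (n+1)) (Idx (n+1)) ℝ from A1 x ⊗ₖ Amat x n) +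
          (show Matrix (Idx (n+1)) (Idx (n+1)) ℝ from B1 x ⊗ₖ Cmat x n) := rfl
      rw [h, Matrix.trace_add, trK, trK, hA1, hB1]; ring
    have hD : Matrix.trace (Dmat x (n+1)) = (1 + x) * Matrix.trace (Dmat x n) := by
      have h : Dmat x (n+1) =
          (show Matrix (Idx (n+1)) (Idx (n+1)) ℝ from D1 x ⊗ₖ Dmat x n) +
          (show Matrix (Idx (n+1)) (Idx (n+1)) ℝ from C1 x ⊗ₖ Bmat x n) := rfl
      rw [h, Matrix.trace_add, trK, trK, hD1, hC1]; ring
    rw [Matrix.trace_add] at ih ⊢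
    rw [hA, hD, ← mul_add, ih]; ring
end

section
/- With T_r(x) = A_r(x) + D_r(x) as above, every row sum and every column sum of T_r(x) equals (1+x)^r; equivalently, the all-ones vector is an eigenvector of T_r(x) and of its transpose with eigenvalue (1+x)^r. -/
open Matrix Kronecker

/-!
Row and column sums of a Kronecker product are products of row and column sums, so the
coproduct recursion acts on the row-sum vectors of `A, B, C, D`. The row sums of `A` and `C`
agree, those of `B` and `D` agree, and `A + B` has constant row sums; this is true for the
`2 × 2` blocks with constant `1 + x`, and one coproduct step multiplies the constant by `1 + x`.
Then `A + D` has the same row sums as `A + B`. Columns are handled dually, pairing `A` with `B`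
and `C` with `D`.
-/

theorem Matrix.sum_kronecker_apply_row {R l m n p : Type*} [CommSemiring R] [Fintype n]
    [Fintype p] (M : Matrix l n R) (N : Matrix m p R) (i : l) (k : m) :
    ∑ q, (M ⊗ₖ N) (i, k) q = (∑ j, M i j) * ∑ q, N k q := by
  rw [Finset.sum_mul_sum, ← Finset.univ_product_univ, Finset.sum_product]
  rfl

theorem Matrix.sum_kronecker_apply_col {R l m n p : Type*} [CommSemiring R] [Fintype l]
    [Fintype m] (M : Matrix l n R) (N : Matrix m p R) (j : n) (q : p) :
    ∑ i, (M ⊗ₖ N) i (j, q) = (∑ i, M i j) * ∑ k, N k q := by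
  rw [Finset.sum_mul_sum, ← Finset.univ_product_univ, Finset.sum_product]
  rfl

section Coproduct

variable {R ι κ : Type*} [CommSemiring R] [Fintype ι] [Fintype κ]

def BlockRowSums (s : R) (A B C D : Matrix ι ι R) : Prop :=
  ∀ i, ∑ j, A i j = ∑ j, C i j ∧ ∑ j, B i j = ∑ j, D i j ∧ ∑ j, A i j + ∑ j, B i j = s

def BlockColSums (s : R) (A B C D : Matrix ι ι R) : Prop :=
  ∀ j, ∑ i, A i j = ∑ i, B i j ∧ ∑ i, C i j = ∑ i, D i j ∧ ∑ i, A i j + ∑ i, C i j = s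

variable {a b c d : Matrix ι ι R} {A B C D : Matrix κ κ R} {t s : R}

theorem BlockRowSums.coproduct (h₁ : BlockRowSums t a b c d) (h : BlockRowSums s A B C D) :
    BlockRowSums (t * s) (a ⊗ₖ A + b ⊗ₖ C) (a ⊗ₖ B + b ⊗ₖ D) (c ⊗ₖ A + d ⊗ₖ C)
      (d ⊗ₖ D + c ⊗ₖ B) := by
  rintro ⟨i, k⟩
  obtain ⟨hac, hbd, ht⟩ := h₁ i
  obtain ⟨hAC, hBD, hs⟩ := h k
  simp only [Matrix.add_apply, Finset.sum_add_distrib, sum_kronecker_apply_row]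
  rw [← hac, ← hbd, ← hAC, ← hBD, ← ht, ← hs]
  exact ⟨rfl, add_comm _ _, by ring⟩

theorem BlockColSums.coproduct (h₁ : BlockColSums t a b c d) (h : BlockColSums s A B C D) :
    BlockColSums (t * s) (a ⊗ₖ A + b ⊗ₖ C) (a ⊗ₖ B + b ⊗ₖ D) (c ⊗ₖ A + d ⊗ₖ C)
      (d ⊗ₖ D + c ⊗ₖ B) := by
  rintro ⟨j, l⟩
  obtain ⟨hab, hcd, ht⟩ := h₁ j
  obtain ⟨hAB, hCD, hs⟩ := h l
  simp only [Matrix.add_apply, Finset.sum_add_distrib, sum_kronecker_apply_col]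
  rw [← hab, ← hcd, ← hAB, ← hCD, ← ht, ← hs]
  exact ⟨by ring, by ring, by ring⟩

end Coproduct

theorem blockRowSums_ABCD1 (x : ℝ) : BlockRowSums (1 + x) (A1 x) (B1 x) (C1 x) (D1 x) := by
  intro i
  fin_cases i <;> simp [A1, B1, C1, D1, add_comm]

theorem blockColSums_ABCD1 (x : ℝ) : BlockColSums (1 + x) (A1 x) (B1 x) (C1 x) (D1 x) := by
  intro j
  fin_cases j <;> simp [A1, B1, C1, D1, add_comm]

theorem blockRowSums_ABCD (x : ℝ) (n : ℕ) :
    BlockRowSums ((1 + x) ^ (n + 1)) (Amat x n) (Bmat x n) (Cmat x n) (Dmat x n) := by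
  induction n with
  | zero => rw [zero_add, pow_one]; exact blockRowSums_ABCD1 x
  | succ n ih => rw [pow_succ']; exact (blockRowSums_ABCD1 x).coproduct ih

theorem blockColSums_ABCD (x : ℝ) (n : ℕ) :
    BlockColSums ((1 + x) ^ (n + 1)) (Amat x n) (Bmat x n) (Cmat x n) (Dmat x n) := by
  induction n with
  | zero => rw [zero_add, pow_one]; exact blockColSums_ABCD1 x
  | succ n ih => rw [pow_succ']; exact (blockColSums_ABCD1 x).coproduct ih

theorem transfer_matrix_row_col_sums (x : ℝ) (n : ℕ) :
    (∀ i : Idx n, ∑ j : Idx n, (Amat x n + Dmat x n) i j = (1 + x) ^ (n + 1)) ∧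
    (∀ j : Idx n, ∑ i : Idx n, (Amat x n + Dmat x n) i j = (1 + x) ^ (n + 1)) := by
  simp only [Matrix.add_apply, Finset.sum_add_distrib]
  refine ⟨fun i => ?_, fun j => ?_⟩
  · obtain ⟨-, hBD, hAB⟩ := blockRowSums_ABCD x n i
    rwa [← hBD]
  · obtain ⟨-, hCD, hAC⟩ := blockColSums_ABCD x n j
    rwa [← hCD]
end

section
/- The blocks of the 4×4 Yang–Baxter matrix satisfy, for any two spectral parameters: (A(x) ± D(x))(A(x') ± D(x')) = (A(x') ± D(x'))(A(x) ± D(x)) and (A(x) ± D(x))(B(x') ± C(x')) = (A(x') ± D(x'))(B(x) ± C(x)), where the blocks at level r are given by the coproduct recursion; these identities hold for all r ≥ 1 and all x, x'. -/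
open Matrix Kronecker

/-!
Write `T_r(x) = !![A_r(x), B_r(x); C_r(x), D_r(x)]` as a `2 × 2` matrix of blocks. The coproduct
recursion says `T_{r+1}(x) = T₁(x) ⊠ T_r(x)`: a matrix product in the auxiliary space whose entries
are multiplied by the Kronecker product. The relation `R (T ⊗ T') = (T' ⊗ T) R` with
`R = a + b K ⊗ K`, `a = 1 - x x'`, `b = x - x'` (the paper's `R̂` multiplied by `1 - x x'`) is stable
under `⊠`, and holds for `T₁` by computation, so it holds at every level.

Summing suitable entries of the relation gives `a X + b Y = 0` and `a Y + b X = 0`, where `X` is the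
difference of the two sides of an identity, so `X = 0` as soon as
`a² - b² = (1 - x²)(1 - x'²) ≠ 0`. The identities with `A - D` and `B - C` are the ones with `A + D`
and `B + C` for `diag(1, -1) T`, which satisfies the same relation because `σ_z ⊗ σ_z` commutes
with `R`. Both sides are continuous in `(x, x')`, which removes the condition `x², x'² ≠ 1`.
-/

def blockKronecker {R ι α β : Type*} [Mul R] [AddCommMonoid R] [Fintype ι]
    (T : Matrix ι ι (Matrix α α R)) (U : Matrix ι ι (Matrix β β R)) :
    Matrix ι ι (Matrix (α × β) (α × β) R) :=
  fun i k => ∑ m, T i m ⊗ₖ U m k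

theorem Continuous.matrix_blockKronecker {R ι α β X : Type*} [Mul R] [AddCommMonoid R]
    [TopologicalSpace R] [ContinuousMul R] [ContinuousAdd R] [Fintype ι] [TopologicalSpace X]
    {T : X → Matrix ι ι (Matrix α α R)} {U : X → Matrix ι ι (Matrix β β R)}
    (hT : Continuous T) (hU : Continuous U) :
    Continuous fun t => blockKronecker (T t) (U t) := by
  unfold blockKronecker kroneckerMap
  fun_prop

/-- The relation `(a + b K ⊗ K) (T ⊗ T') = (T' ⊗ T) (a + b K ⊗ K)` read off entrywise in the
auxiliary space, where `K` swaps the indices `0` and `1`. -/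
def IsRTT {K S : Type*} [CommRing K] [Ring S] [Module K S] (a b : K)
    (T T' : Matrix (Fin 2) (Fin 2) S) : Prop :=
  ∀ i j k l, a • (T i k * T' j l) + b • (T (1 - i) k * T' (1 - j) l)
    = a • (T' i k * T j l) + b • (T' i (1 - k) * T j (1 - l))

theorem isRTT_blockKronecker {R α β : Type*} [CommRing R] [Fintype α] [Fintype β]
    [DecidableEq α] [DecidableEq β] {a b : R} {T T' : Matrix (Fin 2) (Fin 2) (Matrix α α R)}
    {U U' : Matrix (Fin 2) (Fin 2) (Matrix β β R)} (hT : IsRTT a b T T') (hU : IsRTT a b U U') :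
    IsRTT a b (blockKronecker T U) (blockKronecker T' U') := by
  intro i j k l
  have h10 : (1 : Fin 2) - 0 = 1 := rfl
  have h11 : (1 : Fin 2) - 1 = 0 := rfl
  calc a • (blockKronecker T U i k * blockKronecker T' U' j l)
        + b • (blockKronecker T U (1 - i) k * blockKronecker T' U' (1 - j) l)
      = ∑ m, ∑ s, (a • (T i m * T' j s) + b • (T (1 - i) m * T' (1 - j) s))
          ⊗ₖ (U m k * U' s l) := by
        simp only [blockKronecker, Finset.sum_mul_sum, mul_kronecker_mul, Finset.smul_sum,
          add_kronecker, smul_kronecker, Finset.sum_add_distrib]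
    _ = ∑ m, ∑ s, (a • (T' i m * T j s) + b • (T' i (1 - m) * T j (1 - s)))
          ⊗ₖ (U m k * U' s l) := by
        refine Finset.sum_congr rfl fun m _ => Finset.sum_congr rfl fun s _ => ?_
        rw [hT]
    -- the `K ⊗ K` term is moved from the first tensor factor to the second
    _ = ∑ m, ∑ s, (T' i m * T j s)
          ⊗ₖ (a • (U m k * U' s l) + b • (U (1 - m) k * U' (1 - s) l)) := by
        simp only [Fin.sum_univ_two, h10, h11, add_kronecker, kronecker_add,
          smul_kronecker, kronecker_smul]
        abel
    _ = ∑ m, ∑ s, (T' i m * T j s)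
          ⊗ₖ (a • (U' m k * U s l) + b • (U' m (1 - k) * U s (1 - l))) := by
        refine Finset.sum_congr rfl fun m _ => Finset.sum_congr rfl fun s _ => ?_
        rw [hU]
    _ = a • (blockKronecker T' U' i k * blockKronecker T U j l)
        + b • (blockKronecker T' U' i (1 - k) * blockKronecker T U j (1 - l)) := by
        simp only [blockKronecker, Finset.sum_mul_sum, mul_kronecker_mul, Finset.smul_sum,
          kronecker_add, kronecker_smul, Finset.sum_add_distrib]

theorem eq_zero_of_smul_add_smul_eq_zero {K V : Type*} [Field K] [AddCommGroup V] [Module K V]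
    {a b : K} (hab : a ^ 2 ≠ b ^ 2) {X Y : V} (h₁ : a • X + b • Y = 0)
    (h₂ : a • Y + b • X = 0) : X = 0 := by
  have h : (a ^ 2 - b ^ 2) • X = 0 := by
    linear_combination (norm := module) a • h₁ - b • h₂
  exact (smul_eq_zero.mp h).resolve_left (sub_ne_zero.mpr hab)

namespace IsRTT

variable {K S : Type*} [Ring S] {a b : K} {T T' : Matrix (Fin 2) (Fin 2) S}

theorem diagonal_mul [CommRing K] [Module K S] (h : IsRTT a b T T') :
    IsRTT a b (diagonal ![1, -1] * T) (diagonal ![1, -1] * T') := by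
  intro i j k l
  have := h i j k l
  fin_cases i <;> fin_cases j <;> simp_all [Matrix.diagonal_mul, ← neg_add_rev, add_comm]

variable [Field K] [Module K S]

theorem diag_mul_diag (h : IsRTT a b T T') (hab : a ^ 2 ≠ b ^ 2) :
    (T 0 0 + T 1 1) * (T' 0 0 + T' 1 1) = (T' 0 0 + T' 1 1) * (T 0 0 + T 1 1) := by
  refine sub_eq_zero.mp <| eq_zero_of_smul_add_smul_eq_zero hab
    (Y := (T 0 1 + T 1 0) * (T' 0 1 + T' 1 0) - (T' 0 1 + T' 1 0) * (T 0 1 + T 1 0)) ?_ ?_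
  · linear_combination (norm := (simp only [mul_add, add_mul, sub_zero, sub_self]; module))
      h 0 0 0 0 + h 1 1 1 1 + h 0 1 0 1 + h 1 0 1 0
  · linear_combination (norm := (simp only [mul_add, add_mul, sub_zero, sub_self]; module))
      h 0 0 1 1 + h 1 1 0 0 + h 0 1 1 0 + h 1 0 0 1

theorem diag_mul_antidiag (h : IsRTT a b T T') (hab : a ^ 2 ≠ b ^ 2) :
    (T 0 0 + T 1 1) * (T' 0 1 + T' 1 0) = (T' 0 0 + T' 1 1) * (T 0 1 + T 1 0) := by
  refine sub_eq_zero.mp <| eq_zero_of_smul_add_smul_eq_zero hab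
    (Y := (T 0 1 + T 1 0) * (T' 0 0 + T' 1 1) - (T' 0 1 + T' 1 0) * (T 0 0 + T 1 1)) ?_ ?_
  · linear_combination (norm := (simp only [mul_add, add_mul, sub_zero, sub_self]; module))
      h 0 0 0 1 + h 1 1 1 0 + h 0 1 0 0 + h 1 0 1 1
  · linear_combination (norm := (simp only [mul_add, add_mul, sub_zero, sub_self]; module))
      h 0 0 1 0 + h 1 1 0 1 + h 0 1 1 1 + h 1 0 0 0

end IsRTT

def fundamentalBlocks (x : ℝ) : Matrix (Fin 2) (Fin 2) (Matrix (Fin 2) (Fin 2) ℝ) :=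
  !![A1 x, B1 x; C1 x, D1 x]

def blocks (x : ℝ) (n : ℕ) : Matrix (Fin 2) (Fin 2) (Matrix (Idx n) (Idx n) ℝ) :=
  !![Amat x n, Bmat x n; Cmat x n, Dmat x n]

theorem blocks_succ (x : ℝ) (n : ℕ) :
    blocks x (n + 1) = blockKronecker (fundamentalBlocks x) (blocks x n) := by
  funext i k
  fin_cases i <;> fin_cases k
  all_goals (rw [blockKronecker, Fin.sum_univ_two]; first | rfl | exact add_comm _ _)

theorem isRTT_fundamentalBlocks (x x' : ℝ) :
    IsRTT (1 - x * x') (x - x') (fundamentalBlocks x) (fundamentalBlocks x') := by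
  simp only [IsRTT, Fin.forall_fin_two, sub_zero, sub_self]
  and_intros
  all_goals
    simp only [fundamentalBlocks, A1, B1, C1, D1, of_apply, cons_val', cons_val_zero, cons_val_one,
      empty_val', cons_val_fin_one, mul_fin_two, smul_of, of_add_of, smul_cons,
      smul_empty, cons_add_cons, empty_add_empty, smul_eq_mul]
    congr 1
    refine vec2_eq (vec2_eq ?_ ?_) (vec2_eq ?_ ?_) <;> ring

theorem isRTT_blocks (x x' : ℝ) (n : ℕ) :
    IsRTT (1 - x * x') (x - x') (blocks x n) (blocks x' n) := by
  induction n with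
  | zero => exact isRTT_fundamentalBlocks x x'
  | succ n ih =>
    rw [blocks_succ, blocks_succ]
    exact isRTT_blockKronecker (isRTT_fundamentalBlocks x x') ih

theorem continuous_fundamentalBlocks : Continuous fundamentalBlocks := by
  unfold fundamentalBlocks A1 B1 C1 D1
  fun_prop

theorem continuous_blocks (n : ℕ) : Continuous fun x => blocks x n := by
  induction n with
  | zero => exact continuous_fundamentalBlocks
  | succ n ih =>
    simp only [blocks_succ]
    exact continuous_fundamentalBlocks.matrix_blockKronecker ih

@[fun_prop]
theorem continuous_Amat (n : ℕ) : Continuous fun x => Amat x n :=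
  (continuous_blocks n).matrix_elem 0 0

@[fun_prop]
theorem continuous_Bmat (n : ℕ) : Continuous fun x => Bmat x n :=
  (continuous_blocks n).matrix_elem 0 1

@[fun_prop]
theorem continuous_Cmat (n : ℕ) : Continuous fun x => Cmat x n :=
  (continuous_blocks n).matrix_elem 1 0

@[fun_prop]
theorem continuous_Dmat (n : ℕ) : Continuous fun x => Dmat x n :=
  (continuous_blocks n).matrix_elem 1 1

theorem one_sub_mul_sq_ne_sub_sq {x x' : ℝ} (hx : x ^ 2 ≠ 1) (hx' : x' ^ 2 ≠ 1) :
    (1 - x * x') ^ 2 ≠ (x - x') ^ 2 := by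
  have h : (1 - x ^ 2) * (1 - x' ^ 2) ≠ 0 :=
    mul_ne_zero (sub_ne_zero.2 hx.symm) (sub_ne_zero.2 hx'.symm)
  rw [← sub_ne_zero]
  convert h using 1
  ring

theorem dense_sq_ne_one : Dense {x : ℝ | x ^ 2 ≠ 1} := by
  have h : {x : ℝ | x ^ 2 ≠ 1} = ({1, -1} : Set ℝ)ᶜ := by
    ext x
    simp [sq_eq_one_iff]
  rw [h]
  exact (Set.toFinite _).countable.dense_compl ℝ

theorem eq_of_forall_sq_ne_one {M : Type*} [TopologicalSpace M] [T2Space M] {f g : ℝ → ℝ → M}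
    (h : ∀ x x', x ^ 2 ≠ 1 → x' ^ 2 ≠ 1 → f x x' = g x x') (x x' : ℝ)
    (hf : Continuous fun q : ℝ × ℝ => f q.1 q.2 := by fun_prop)
    (hg : Continuous fun q : ℝ × ℝ => g q.1 q.2 := by fun_prop) : f x x' = g x x' :=
  congrFun (hf.ext_on (dense_sq_ne_one.prod dense_sq_ne_one) hg fun q hq => h q.1 q.2 hq.1 hq.2)
    (x, x')

theorem RTT_block_identities (x x' : ℝ) (n : ℕ) :
    ((Amat x n + Dmat x n) * (Amat x' n + Dmat x' n)
        = (Amat x' n + Dmat x' n) * (Amat x n + Dmat x n)) ∧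
    ((Amat x n - Dmat x n) * (Amat x' n - Dmat x' n)
        = (Amat x' n - Dmat x' n) * (Amat x n - Dmat x n)) ∧
    ((Amat x n + Dmat x n) * (Bmat x' n + Cmat x' n)
        = (Amat x' n + Dmat x' n) * (Bmat x n + Cmat x n)) ∧
    ((Amat x n - Dmat x n) * (Bmat x' n - Cmat x' n)
        = (Amat x' n - Dmat x' n) * (Bmat x n - Cmat x n)) := by
  refine ⟨?_, ?_, ?_, ?_⟩ <;>
    apply eq_of_forall_sq_ne_one (x := x) (x' := x') <;> intro y y' hy hy'
  · exact (isRTT_blocks y y' n).diag_mul_diag (one_sub_mul_sq_ne_sub_sq hy hy')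
  · simpa [blocks, sub_eq_add_neg] using
      (isRTT_blocks y y' n).diagonal_mul.diag_mul_diag (one_sub_mul_sq_ne_sub_sq hy hy')
  · exact (isRTT_blocks y y' n).diag_mul_antidiag (one_sub_mul_sq_ne_sub_sq hy hy')
  · simpa [blocks, sub_eq_add_neg] using
      (isRTT_blocks y y' n).diagonal_mul.diag_mul_antidiag (one_sub_mul_sq_ne_sub_sq hy hy')
end

section
/- For all r ≥ 1 and all scalars x, x', the transfer matrices commute: [A_r(x)+D_r(x), A_r(x')+D_r(x')] = 0, where A_r, D_r come from the coproduct recursion for the 4×4 eight-vertex braid matrix R̂(x) = I₄ + x K⊗K. -/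
open Matrix Kronecker

/-!
The level-one Lax operator `L(x)`, whose blocks are `A₁, B₁, C₁, D₁`, satisfies the RTT
relation `Ř (L(x) ⊗ L(y)) = (L(y) ⊗ L(x)) Ř` with `Ř = (1 - x y) + (x - y) K ⊗ K`; this is a
finite check. The coproduct recursion preserves the RTT relation, so it holds for the monodromy
matrix `T(x) = [[A_r, B_r], [C_r, D_r]]`. Taking auxiliary traces of its diagonal and
anti-diagonal parts gives, for `u = [t(x), t(y)]` and `v = [tr K T(x), tr K T(y)]`, the linear
system `α u + β v = 0`, `β u + α v = 0` with `α = 1 - x y`, `β = x - y`. Its determinant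
`α² - β² = (1 - x²)(1 - y²)` vanishes at `x = ±1`, so we cancel it over `ℤ[x, y]` and
specialize.
-/

lemma Fin.two_add_one_add_one (j : Fin 2) : j + 1 + 1 = j := by
  fin_cases j <;> rfl

lemma Fin.sum_two_add_one {M : Type*} [AddCommMonoid M] (f : Fin 2 → M) :
    ∑ j, f (j + 1) = ∑ j, f j :=
  Equiv.sum_comp (Equiv.addRight 1) f

namespace Monodromy

variable {R : Type*} [CommRing R]

/-- `P a b c d` is the entry in row `(a, b)` and column `(c, d)` of an operator on the tensor
square of the auxiliary space `Fin 2`. -/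
abbrev Fam4 (M : Type*) := Fin 2 → Fin 2 → Fin 2 → Fin 2 → M

section Exchange

variable {M : Type*} [AddCommMonoid M] [Module R M]

/-- `Ř P` for `Ř = α + β K ⊗ K`. -/
def rowExch (α β : R) (P : Fam4 M) : Fam4 M :=
  fun a b c d => α • P a b c d + β • P (a + 1) (b + 1) c d

/-- `P Ř` for `Ř = α + β K ⊗ K`. -/
def colExch (α β : R) (P : Fam4 M) : Fam4 M :=
  fun a b c d => α • P a b c d + β • P a b (c + 1) (d + 1)

end Exchange

section Contract

variable {m n : Type*}

/-- The product of two operators whose entries are multiplied by `⊗ₖ`. -/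
def contract (P : Fam4 (Matrix m m R)) (Q : Fam4 (Matrix n n R)) :
    Fam4 (Matrix (m × n) (m × n) R) :=
  fun a b c d => ∑ j, ∑ j', P a b j j' ⊗ₖ Q j j' c d

def coprod (L : Fin 2 → Fin 2 → Matrix m m R) (T : Fin 2 → Fin 2 → Matrix n n R) :
    Fin 2 → Fin 2 → Matrix (m × n) (m × n) R :=
  fun i k => ∑ j, L i j ⊗ₖ T j k

variable (α β : R) (P : Fam4 (Matrix m m R)) (Q : Fam4 (Matrix n n R))

lemma rowExch_contract : rowExch α β (contract P Q) = contract (rowExch α β P) Q := by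
  funext a b c d
  simp only [rowExch, contract, Finset.smul_sum, add_kronecker, smul_kronecker,
    Finset.sum_add_distrib]

lemma colExch_contract : colExch α β (contract P Q) = contract P (colExch α β Q) := by
  funext a b c d
  simp only [colExch, contract, Finset.smul_sum, kronecker_add, kronecker_smul,
    Finset.sum_add_distrib]

lemma contract_colExch : contract (colExch α β P) Q = contract P (rowExch α β Q) := by
  funext a b c d
  have shift : ∑ j, ∑ j', P a b (j + 1) (j' + 1) ⊗ₖ Q j j' c d
      = ∑ j, ∑ j', P a b j j' ⊗ₖ Q (j + 1) (j' + 1) c d := by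
    conv_rhs => rw [← Fin.sum_two_add_one]; enter [2, j]; rw [← Fin.sum_two_add_one]
    simp only [Fin.two_add_one_add_one]
  simp only [colExch, rowExch, contract, add_kronecker, kronecker_add, smul_kronecker,
    kronecker_smul, Finset.sum_add_distrib, ← Finset.smul_sum, shift]

end Contract

section RTT

variable {m n : Type*} [Fintype m] [Fintype n]

/-- `T ⊗ T'` on the auxiliary spaces. -/
def pairProd (T T' : Fin 2 → Fin 2 → Matrix m m R) : Fam4 (Matrix m m R) :=
  fun a b c d => T a c * T' b d

lemma pairProd_coprod (L L' : Fin 2 → Fin 2 → Matrix m m R)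
    (T T' : Fin 2 → Fin 2 → Matrix n n R) :
    pairProd (coprod L T) (coprod L' T') = contract (pairProd L L') (pairProd T T') := by
  funext a b c d
  simp only [pairProd, coprod, contract, Finset.sum_mul_sum, mul_kronecker_mul]

def IsRTT (α β : R) (T T' : Fin 2 → Fin 2 → Matrix m m R) : Prop :=
  rowExch α β (pairProd T T') = colExch α β (pairProd T' T)

lemma IsRTT.coprod {α β : R} {L L' : Fin 2 → Fin 2 → Matrix m m R}
    {T T' : Fin 2 → Fin 2 → Matrix n n R} (hL : IsRTT α β L L') (hT : IsRTT α β T T') :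
    IsRTT α β (coprod L T) (coprod L' T') := by
  rw [IsRTT, pairProd_coprod, pairProd_coprod, rowExch_contract, hL, contract_colExch, hT,
    colExch_contract]

lemma IsRTT.smul_trace_mul_comm {α β : R} {T T' : Fin 2 → Fin 2 → Matrix m m R}
    (h : IsRTT α β T T') :
    (α ^ 2 - β ^ 2) • ((∑ a, T a a) * ∑ a, T' a a)
      = (α ^ 2 - β ^ 2) • ((∑ a, T' a a) * ∑ a, T a a) := by
  have trace_swap (T : Fin 2 → Fin 2 → Matrix m m R) : ∑ a, T a (a + 1) = ∑ a, T (a + 1) a := by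
    rw [← Fin.sum_two_add_one]
    simp only [Fin.two_add_one_add_one]
  have diag := congrArg (fun P => ∑ a, ∑ b, P a b a b) h
  have offDiag := congrArg (fun P => ∑ a, ∑ b, P a b (a + 1) (b + 1)) h
  simp only [rowExch, colExch, pairProd, Finset.sum_add_distrib, ← Finset.smul_sum,
    ← Finset.sum_mul_sum, Fin.two_add_one_add_one, trace_swap] at diag offDiag
  linear_combination (norm := module) α • diag - β • offDiag

end RTT

def lax (x : R) : Fin 2 → Fin 2 → Matrix (Fin 2) (Fin 2) R :=
  ![![!![1, 0; 0, x], !![0, x; 1, 0]], ![!![0, 1; x, 0], !![x, 0; 0, 1]]]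

lemma lax_isRTT (x y : R) : IsRTT (1 - x * y) (x - y) (lax x) (lax y) := by
  funext a b c d
  fin_cases a <;> fin_cases b <;> fin_cases c <;> fin_cases d <;>
    simp [rowExch, colExch, pairProd, lax, Matrix.smul_of, Matrix.of_add_of] <;> grind

def monodromy (x : R) : (n : ℕ) → Fin 2 → Fin 2 → Matrix (Idx n) (Idx n) R
  | 0 => lax x
  | n + 1 => coprod (lax x) (monodromy x n)

lemma monodromy_isRTT (x y : R) :
    ∀ n, IsRTT (1 - x * y) (x - y) (monodromy x n) (monodromy y n)
  | 0 => lax_isRTT x y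
  | n + 1 => (lax_isRTT x y).coprod (monodromy_isRTT x y n)

def transfer (x : R) (n : ℕ) : Matrix (Idx n) (Idx n) R :=
  ∑ a, monodromy x n a a

section Map

variable {S : Type*} [CommRing S] (f : R →+* S) (x : R)

lemma coprod_map {m n : Type*}
    (L : Fin 2 → Fin 2 → Matrix m m R) (T : Fin 2 → Fin 2 → Matrix n n R) (i k : Fin 2) :
    (coprod L T i k).map f =
      coprod (fun i j => (L i j).map f) (fun j k => (T j k).map f) i k := by
  ext a b
  simp only [coprod, Matrix.map_apply, Matrix.sum_apply, map_sum, kroneckerMap_apply, map_mul]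

lemma lax_map (i k : Fin 2) : (lax x i k).map f = lax (f x) i k := by
  fin_cases i <;> fin_cases k <;> ext a b <;> fin_cases a <;> fin_cases b <;> simp [lax]

lemma monodromy_map : ∀ n i k, (monodromy x n i k).map f = monodromy (f x) n i k
  | 0, i, k => lax_map f x i k
  | n + 1, i, k => by
    show (coprod (lax x) (monodromy x n) i k).map f = coprod (lax (f x)) (monodromy (f x) n) i k
    simp only [coprod_map, lax_map, monodromy_map n]

lemma transfer_map (n : ℕ) : (transfer x n).map f = transfer (f x) n := by
  ext i j
  simp only [transfer, Matrix.map_apply, Matrix.sum_apply, map_sum, ← monodromy_map f x n]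

end Map

theorem transfer_mul_comm (x y : R) (n : ℕ) :
    transfer x n * transfer y n = transfer y n * transfer x n := by
  let X : Fin 2 → MvPolynomial (Fin 2) ℤ := MvPolynomial.X
  have generic : transfer (X 0) n * transfer (X 1) n = transfer (X 1) n * transfer (X 0) n := by
    have det_ne_zero : (1 - X 0 * X 1) ^ 2 - (X 0 - X 1) ^ 2 ≠ 0 := by
      intro h
      simpa [X] using congrArg (MvPolynomial.eval 0) h
    exact smul_right_injective _ det_ne_zero (monodromy_isRTT (X 0) (X 1) n).smul_trace_mul_comm
  let f : MvPolynomial (Fin 2) ℤ →+* R := MvPolynomial.eval₂Hom (Int.castRingHom R) ![x, y]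
  have specialized := congrArg (Matrix.map · f) generic
  simp only [Matrix.map_mul, transfer_map] at specialized
  simpa [f, X] using specialized

end Monodromy

open Monodromy

lemma monodromy_eq_ABCD (x : ℝ) :
    ∀ n, monodromy x n = ![![Amat x n, Bmat x n], ![Cmat x n, Dmat x n]]
  | 0 => by ext i k : 2; fin_cases i <;> fin_cases k <;> rfl
  | n + 1 => by
    ext i k : 2
    simp only [monodromy, coprod, Fin.sum_univ_two, monodromy_eq_ABCD x n]
    fin_cases i <;> fin_cases k
    · rfl
    · rfl
    · rfl
    · exact add_comm _ _

theorem transfer_matrices_commute (x x' : ℝ) (n : ℕ) :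
    (Amat x n + Dmat x n) * (Amat x' n + Dmat x' n)
      = (Amat x' n + Dmat x' n) * (Amat x n + Dmat x n) := by
  simpa [transfer, monodromy_eq_ABCD, Fin.sum_univ_two] using transfer_mul_comm x x' n
end
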